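/- arXiv:2511.09192 — 2 statements merged into one kernel-verified Lean document; each statement's English description precedes it below -/
import Mathlib

section
/- Suppose B is an observation barrier function (OBF) with level q. Then the process (Y_n)_{0 ≤ n ≤ t_k + 1} is a submartingale with respect to (𝓕_n): for every n ≤ t_k, E[Y_{n+1} | 𝓕_n] ≥ Y_n almost surely; consequently E[Y_{t_k+1}] ≥ E[Y_0] ≥ q. -/
/-!
`Y n` is `B n (X n)` killed on leaving the guard sets: it is the indicator of the survival event
`S n = {X i ∈ G i for all i < n}` times `B n (X n)`, and `S (n + 1) = S n ∩ {X n ∈ G n}` is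
`𝓕 n`-measurable. Hence `E[Y (n + 1) | 𝓕 n] = 1_{S (n + 1)} ⬝ E[B (n + 1) (X (n + 1)) | 𝓕 n]`,
which dominates `Y n` by the drift condition on `{X n ∈ G n}` and because `B n ≤ 0` off `G n`.
Taking expectations makes `E[Y n]` nondecreasing up to `t_k + 1`, and `Y 0 = B 0 x₀` a.s.
-/

open MeasureTheory

/-- The process `Y n = (∏_{i<n} 1[X_i ∉ U]) ⬝ (∏_{t_i < n} 1[X_{t_i} ∈ O_i]) ⬝ B(n, X_n)`. -/
noncomputable def Yproc {Ω 𝒳 : Type*} (X : ℕ → Ω → 𝒳) (U : Set 𝒳) {k : ℕ}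
    (t : Fin (k + 1) → ℕ) (O : Fin (k + 1) → Set 𝒳) (B : ℕ → 𝒳 → ℝ)
    (n : ℕ) (ω : Ω) : ℝ :=
  (∏ i ∈ Finset.range n, Set.indicator Uᶜ (fun _ => (1 : ℝ)) (X i ω)) *
    ((∏ i ∈ Finset.univ.filter (fun i : Fin (k + 1) => t i < n),
        Set.indicator (O i) (fun _ => (1 : ℝ)) (X (t i) ω)) *
      B n (X n ω))

section Guard

variable {Ω 𝒳 : Type*} (X : ℕ → Ω → 𝒳) (U : Set 𝒳) {k : ℕ} (t : Fin (k + 1) → ℕ)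
  (O : Fin (k + 1) → Set 𝒳)

def guardSet (n : ℕ) : Set 𝒳 := {x | x ∉ U ∧ ∀ i, t i = n → x ∈ O i}

def survivalEvent (n : ℕ) : Set Ω := {ω | ∀ i < n, X i ω ∈ guardSet U t O i}

@[simp]
lemma survivalEvent_zero : survivalEvent X U t O 0 = Set.univ := by
  simp [survivalEvent]

lemma survivalEvent_succ (n : ℕ) :
    survivalEvent X U t O (n + 1) = survivalEvent X U t O n ∩ X n ⁻¹' guardSet U t O n := by
  ext ω
  exact Nat.forall_lt_succ_right

lemma Yproc_eq_indicator (B : ℕ → 𝒳 → ℝ) (n : ℕ) :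
    Yproc X U t O B n = (survivalEvent X U t O n).indicator fun ω => B n (X n ω) := by
  ext ω
  by_cases hω : ω ∈ survivalEvent X U t O n
  · have hsafe : ∏ i ∈ Finset.range n, Uᶜ.indicator (fun _ => (1 : ℝ)) (X i ω) = 1 :=
      Finset.prod_eq_one fun i hi =>
        Set.indicator_of_mem (hω i (Finset.mem_range.1 hi)).1 _
    have hobs : ∏ i ∈ Finset.univ.filter (fun i : Fin (k + 1) => t i < n),
        (O i).indicator (fun _ => (1 : ℝ)) (X (t i) ω) = 1 :=
      Finset.prod_eq_one fun i hi =>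
        Set.indicator_of_mem ((hω _ (Finset.mem_filter.1 hi).2).2 i rfl) _
    rw [Yproc, hsafe, hobs, one_mul, one_mul, Set.indicator_of_mem hω]
  · obtain ⟨i, hin, hguard⟩ : ∃ i < n, X i ω ∉ guardSet U t O i := by
      simpa [survivalEvent] using hω
    rw [Set.indicator_of_notMem hω, Yproc]
    by_cases hU : X i ω ∈ U
    · have hfactor : Uᶜ.indicator (fun _ => (1 : ℝ)) (X i ω) = 0 :=
        Set.indicator_of_notMem (not_not.2 hU) _
      rw [Finset.prod_eq_zero (Finset.mem_range.2 hin) hfactor, zero_mul]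
    · obtain ⟨j, rfl, hO⟩ : ∃ j, t j = i ∧ X i ω ∉ O j := by
        simpa [guardSet, hU] using hguard
      rw [Finset.prod_eq_zero (i := j) (by simpa using hin) (Set.indicator_of_notMem hO _),
        zero_mul, mul_zero]

end Guard

section Measurability

variable {Ω 𝒳 : Type*} [MeasurableSpace 𝒳] {U : Set 𝒳} {k : ℕ} {t : Fin (k + 1) → ℕ}
  {O : Fin (k + 1) → Set 𝒳}

lemma measurableSet_guardSet (hU : MeasurableSet U) (hO : ∀ i, MeasurableSet (O i)) (n : ℕ) :
    MeasurableSet (guardSet U t O n) := by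
  have : guardSet U t O n = Uᶜ ∩ ⋂ i ∈ {i | t i = n}, O i := by
    ext; simp [guardSet]
  rw [this]
  exact hU.compl.inter (.biInter (Set.to_countable _) fun i _ => hO i)

lemma measurableSet_survivalEvent {m0 : MeasurableSpace Ω} (𝓕 : Filtration ℕ m0)
    {X : ℕ → Ω → 𝒳} (hX : ∀ n, Measurable[𝓕 n] (X n)) (hU : MeasurableSet U)
    (hO : ∀ i, MeasurableSet (O i)) {n m : ℕ} (hnm : n ≤ m + 1) :
    MeasurableSet[𝓕 m] (survivalEvent X U t O n) := by
  have : survivalEvent X U t O n = ⋂ i, ⋂ (_ : i < n), X i ⁻¹' guardSet U t O i := by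
    ext; simp [survivalEvent]
  rw [this]
  exact MeasurableSet.iInter fun i => MeasurableSet.iInter fun hi =>
    (hX i).mono (𝓕.mono (by omega)) le_rfl (measurableSet_guardSet hU hO i)

end Measurability

section Submartingale

variable {Ω : Type*} {m m0 : MeasurableSpace Ω} {μ : Measure Ω}

lemma integrable_comp_of_bounded [IsFiniteMeasure μ] {𝒳 : Type*} [MeasurableSpace 𝒳]
    {g : 𝒳 → ℝ} (hg : Measurable g) (hbdd : ∃ C, ∀ x, |g x| ≤ C) {Z : Ω → 𝒳}
    (hZ : Measurable Z) : Integrable (fun ω => g (Z ω)) μ := by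
  obtain ⟨C, hC⟩ := hbdd
  exact .of_bound (hg.comp hZ).aestronglyMeasurable C (.of_forall fun ω => hC (Z ω))

lemma indicator_le_condExp_indicator_inter {s G : Set Ω} {f g : Ω → ℝ} (hg : Integrable g μ)
    (hsG : MeasurableSet[m] (s ∩ G)) (hdrift : ∀ᵐ ω ∂μ, ω ∈ G → f ω ≤ μ[g | m] ω)
    (hkill : ∀ ω ∉ G, f ω ≤ 0) :
    s.indicator f ≤ᵐ[μ] μ[(s ∩ G).indicator g | m] := by
  filter_upwards [condExp_indicator hg hsG, hdrift] with ω hcond hω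
  rw [hcond]
  by_cases hs : ω ∈ s
  · by_cases hG : ω ∈ G
    · simpa [Set.indicator_of_mem hs, Set.indicator_of_mem (Set.mem_inter hs hG)] using hω hG
    · simpa [Set.indicator_of_mem hs, hG] using hkill ω hG
  · simp [hs]

lemma integral_le_integral_of_le_condExp [IsFiniteMeasure μ] (𝓕 : Filtration ℕ m0)
    {f : ℕ → Ω → ℝ} {N : ℕ} (hf : ∀ n ≤ N, Integrable (f n) μ)
    (hle : ∀ n < N, f n ≤ᵐ[μ] μ[f (n + 1) | 𝓕 n]) :
    ∫ ω, f 0 ω ∂μ ≤ ∫ ω, f N ω ∂μ := by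
  induction N with
  | zero => rfl
  | succ N ih =>
    calc ∫ ω, f 0 ω ∂μ ≤ ∫ ω, f N ω ∂μ :=
          ih (fun n hn => hf n (by omega)) (fun n hn => hle n (by omega))
      _ ≤ ∫ ω, μ[f (N + 1) | 𝓕 N] ω ∂μ :=
          integral_mono_ae (hf N (by omega)) integrable_condExp (hle N N.lt_succ_self)
      _ = ∫ ω, f (N + 1) ω ∂μ := integral_condExp (𝓕.le N)

end Submartingale

theorem obf_submartingale_general
    {Ω : Type*} {m0 : MeasurableSpace Ω} (ℙ : Measure Ω) [IsProbabilityMeasure ℙ]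
    (𝓕 : Filtration ℕ m0)
    {𝒳 : Type*} [MeasurableSpace 𝒳]
    (X : ℕ → Ω → 𝒳) (hX_adapted : ∀ n, Measurable[𝓕 n] (X n))
    (x₀ : 𝒳) (hX0 : ∀ᵐ ω ∂ℙ, X 0 ω = x₀)
    (U : Set 𝒳) (hU : MeasurableSet U)
    (k : ℕ) (t : Fin (k + 1) → ℕ)
    (O : Fin (k + 1) → Set 𝒳) (hO : ∀ i, MeasurableSet (O i))
    (B : ℕ → 𝒳 → ℝ)
    (hB_meas : ∀ n, Measurable (B n))
    (hB_bdd : ∀ n, ∃ C : ℝ, ∀ x, |B n x| ≤ C)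
    (q : ℝ)
    -- (i) initial condition
    (h_init : q ≤ B 0 x₀)
    -- (ii) submartingale (drift) condition on the guard set `G n`
    (h_drift : ∀ n ≤ t (Fin.last k), ∀ᵐ ω ∂ℙ,
      (X n ω ∉ U ∧ ∀ i, t i = n → X n ω ∈ O i) →
        B n (X n ω) ≤ (ℙ[fun ω' => B (n + 1) (X (n + 1) ω') | 𝓕 n]) ω)
    -- (iii) nonpositivity outside the guard set
    (h_nonpos : ∀ n ≤ t (Fin.last k), ∀ x : 𝒳,
      ¬(x ∉ U ∧ ∀ i, t i = n → x ∈ O i) → B n x ≤ 0) :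
    (∀ n ≤ t (Fin.last k), ∀ᵐ ω ∂ℙ,
        Yproc X U t O B n ω ≤ (ℙ[Yproc X U t O B (n + 1) | 𝓕 n]) ω) ∧
      q ≤ ∫ ω, Yproc X U t O B 0 ω ∂ℙ ∧
      ∫ ω, Yproc X U t O B 0 ω ∂ℙ ≤ ∫ ω, Yproc X U t O B (t (Fin.last k) + 1) ω ∂ℙ := by
  have hBX (n : ℕ) : Integrable (fun ω => B n (X n ω)) ℙ :=
    integrable_comp_of_bounded (hB_meas n) (hB_bdd n) ((hX_adapted n).mono (𝓕.le n) le_rfl)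
  have hY (n : ℕ) : Integrable (Yproc X U t O B n) ℙ := by
    rw [Yproc_eq_indicator]
    exact (hBX n).indicator
      (𝓕.le n _ (measurableSet_survivalEvent 𝓕 hX_adapted hU hO n.le_succ))
  have hstep : ∀ n ≤ t (Fin.last k),
      Yproc X U t O B n ≤ᵐ[ℙ] ℙ[Yproc X U t O B (n + 1) | 𝓕 n] := fun n hn => by
    rw [Yproc_eq_indicator, Yproc_eq_indicator, survivalEvent_succ]
    refine indicator_le_condExp_indicator_inter (hBX (n + 1)) ?_ (h_drift n hn)
      fun ω hω => h_nonpos n hn _ hω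
    rw [← survivalEvent_succ]
    exact measurableSet_survivalEvent 𝓕 hX_adapted hU hO le_rfl
  have hY0 : Yproc X U t O B 0 =ᵐ[ℙ] fun _ => B 0 x₀ := by
    filter_upwards [hX0] with ω hω
    simp [Yproc_eq_indicator, hω]
  refine ⟨hstep, ?_, integral_le_integral_of_le_condExp 𝓕 (fun n _ => hY n)
    fun n hn => hstep n (Nat.lt_succ_iff.1 hn)⟩
  simpa [integral_congr_ae hY0] using h_init

/-- If `B` is an OBF with level `q`, the process `(Y_n)_{n ≤ t_k + 1}` is a
submartingale w.r.t. `𝓕`, and `E[Y_{t_k+1}] ≥ E[Y_0] ≥ q`. -/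
theorem obf_submartingale
    {Ω : Type*} {m0 : MeasurableSpace Ω} (ℙ : Measure Ω) [IsProbabilityMeasure ℙ]
    (𝓕 : Filtration ℕ m0)
    {𝒳 : Type*} [MeasurableSpace 𝒳]
    (X : ℕ → Ω → 𝒳) (hX_adapted : ∀ n, Measurable[𝓕 n] (X n))
    (x₀ : 𝒳) (hX0 : ∀ᵐ ω ∂ℙ, X 0 ω = x₀)
    (U : Set 𝒳) (hU : MeasurableSet U)
    (k : ℕ) (t : Fin (k + 1) → ℕ) (ht : StrictMono t)
    (O : Fin (k + 1) → Set 𝒳) (hO : ∀ i, MeasurableSet (O i))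
    (B : ℕ → 𝒳 → ℝ)
    (hB_meas : ∀ n, Measurable (B n))
    (hB_bdd : ∀ n, ∃ C : ℝ, ∀ x, |B n x| ≤ C)
    (q : ℝ)
    -- (i) initial condition
    (h_init : q ≤ B 0 x₀)
    -- (ii) submartingale (drift) condition on the guard set `G n`
    (h_drift : ∀ n ≤ t (Fin.last k), ∀ᵐ ω ∂ℙ,
      (X n ω ∉ U ∧ ∀ i, t i = n → X n ω ∈ O i) →
        B n (X n ω) ≤ (ℙ[fun ω' => B (n + 1) (X (n + 1) ω') | 𝓕 n]) ω)
    -- (iii) nonpositivity outside the guard set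
    (h_nonpos : ∀ n ≤ t (Fin.last k), ∀ x : 𝒳,
      ¬(x ∉ U ∧ ∀ i, t i = n → x ∈ O i) → B n x ≤ 0)
    -- (iv) terminal bound
    (h_term : ∀ x : 𝒳, B (t (Fin.last k) + 1) x ≤ 1) :
    (∀ n ≤ t (Fin.last k), ∀ᵐ ω ∂ℙ,
        Yproc X U t O B n ω ≤ (ℙ[Yproc X U t O B (n + 1) | 𝓕 n]) ω) ∧
      q ≤ ∫ ω, Yproc X U t O B 0 ω ∂ℙ ∧
      ∫ ω, Yproc X U t O B 0 ω ∂ℙ ≤ ∫ ω, Yproc X U t O B (t (Fin.last k) + 1) ω ∂ℙ :=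
  obf_submartingale_general ℙ 𝓕 X hX_adapted x₀ hX0 U hU k t O hO B hB_meas hB_bdd q h_init h_drift
    h_nonpos
end

section
/- Suppose B is an observation reach-avoid barrier function (ORBF) with level p for the target set T, and let τ := inf{n ∈ ℕ : X_n ∈ U ∪ T}. Then for every N ∈ ℕ, ℙ(τ ≤ N, X_τ ∈ U, and X_{t_i} ∈ O_i for every i ∈ {1,…,k} with t_i < τ) ≤ p. -/
open MeasureTheory

/-
Let `A n` be the event that `X m` lay in the guard set `G m \ T` at every time `m < n`. The event
`A (n + 1)` is `𝓕 n`-measurable and on it the drift condition holds at time `n`; together with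
`B ≥ 1` on `U` and `B ≥ 0` this gives
`∫_{A (n+1)} B (n+1) (X (n+1)) + ℙ(A n ∩ {X n ∈ U}) ≤ ∫_{A n} B n (X n)`.
Telescoping down to `∫ B 0 (X 0) = B 0 x₀ ≤ p`, the probabilities of leaving the guards into `U`
at the times `0, …, N` add up to at most `p`, and the event in question is contained in the union
of these exits (the exit happening at time `τ`).
-/

/-- The (extended-natural-valued) first hitting time of a set `S` by the process `X`:
`τ(ω) = inf {n : ℕ | X n ω ∈ S}`, equal to `∞` if `X` never enters `S`. -/
noncomputable def hitTime {Ω 𝒳 : Type*} (X : ℕ → Ω → 𝒳) (S : Set 𝒳) (ω : Ω) : ℕ∞ :=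
  ⨅ (n : ℕ) (_ : X n ω ∈ S), (n : ℕ∞)

def guardedUpTo {Ω 𝒳 : Type*} (X : ℕ → Ω → 𝒳) (G : ℕ → Set 𝒳) (n : ℕ) : Set Ω :=
  {ω | ∀ m < n, X m ω ∈ G m}

section Guarded

variable {Ω 𝒳 : Type*} {X : ℕ → Ω → 𝒳} {G : ℕ → Set 𝒳}

@[simp]
lemma guardedUpTo_zero : guardedUpTo X G 0 = Set.univ := by
  simp [guardedUpTo]

lemma guardedUpTo_succ (n : ℕ) :
    guardedUpTo X G (n + 1) = guardedUpTo X G n ∩ X n ⁻¹' G n := by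
  ext ω
  simp only [guardedUpTo, Set.mem_ofPred_eq, Set.mem_inter_iff, Set.mem_preimage,
    Nat.forall_lt_succ_right]

lemma measurableSet_guardedUpTo {m0 : MeasurableSpace Ω} [MeasurableSpace 𝒳]
    {𝓕 : Filtration ℕ m0} (hX : ∀ n, Measurable[𝓕 n] (X n))
    (hG : ∀ n, MeasurableSet (G n)) (n : ℕ) : MeasurableSet[𝓕 n] (guardedUpTo X G n) := by
  induction n with
  | zero => simp
  | succ n ih =>
    rw [guardedUpTo_succ]
    exact (𝓕.mono n.le_succ _ ih).inter ((hX n).mono (𝓕.mono n.le_succ) le_rfl (hG n))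

end Guarded

section Barrier

variable {Ω 𝒳 : Type*} {m0 : MeasurableSpace Ω} [MeasurableSpace 𝒳]
  {ℙ : Measure Ω} [IsFiniteMeasure ℙ] {𝓕 : Filtration ℕ m0}
  {X : ℕ → Ω → 𝒳} {G : ℕ → Set 𝒳} {U : Set 𝒳} {B : ℕ → 𝒳 → ℝ}

theorem setIntegral_guardedUpTo_succ_add_measureReal_le
    (hX : ∀ n, Measurable[𝓕 n] (X n)) (hG : ∀ n, MeasurableSet (G n)) (hU : MeasurableSet U)
    (hGU : ∀ n, Disjoint (G n) U) (hB_nonneg : ∀ n x, 0 ≤ B n x)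
    (hB_unsafe : ∀ n, ∀ x ∈ U, 1 ≤ B n x) (hB_int : ∀ n, Integrable (fun ω => B n (X n ω)) ℙ)
    (n : ℕ) (hdrift : ∀ᵐ ω ∂ℙ, X n ω ∈ G n →
      ℙ[fun ω => B (n + 1) (X (n + 1) ω) | 𝓕 n] ω ≤ B n (X n ω)) :
    ∫ ω in guardedUpTo X G (n + 1), B (n + 1) (X (n + 1) ω) ∂ℙ
        + ℙ.real (guardedUpTo X G n ∩ X n ⁻¹' U) ≤
      ∫ ω in guardedUpTo X G n, B n (X n ω) ∂ℙ := by
  set A := guardedUpTo X G n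
  set E := A ∩ X n ⁻¹' U
  have hA : MeasurableSet[𝓕 n] A := measurableSet_guardedUpTo hX hG n
  have hA' : MeasurableSet[𝓕 n] (A ∩ X n ⁻¹' G n) := hA.inter (hX n (hG n))
  have hE : MeasurableSet E := (𝓕.le n _ hA).inter ((hX n).mono (𝓕.le n) le_rfl hU)
  have drift_step : ∫ ω in A ∩ X n ⁻¹' G n, B (n + 1) (X (n + 1) ω) ∂ℙ ≤
      ∫ ω in A ∩ X n ⁻¹' G n, B n (X n ω) ∂ℙ := by
    rw [← setIntegral_condExp (𝓕.le n) (hB_int (n + 1)) hA']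
    refine setIntegral_mono_ae_restrict integrable_condExp.integrableOn
      (hB_int n).integrableOn ?_
    rw [Filter.EventuallyLE, ae_restrict_iff' (𝓕.le n _ hA')]
    filter_upwards [hdrift] with ω hω hωA' using hω hωA'.2
  have unsafe_step : ℙ.real E ≤ ∫ ω in E, B n (X n ω) ∂ℙ := by
    simpa using setIntegral_ge_of_const_le_real hE (measure_ne_top ℙ E)
      (fun ω hω => hB_unsafe n _ hω.2) (hB_int n).integrableOn
  have hdisj : Disjoint (A ∩ X n ⁻¹' G n) E :=
    Set.disjoint_left.2 fun ω h h' => Set.disjoint_left.1 (hGU n) h.2 h'.2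
  rw [guardedUpTo_succ]
  calc _ ≤ ∫ ω in A ∩ X n ⁻¹' G n, B n (X n ω) ∂ℙ + ∫ ω in E, B n (X n ω) ∂ℙ :=
        add_le_add drift_step unsafe_step
    _ = ∫ ω in (A ∩ X n ⁻¹' G n) ∪ E, B n (X n ω) ∂ℙ :=
        (setIntegral_union hdisj hE (hB_int n).integrableOn (hB_int n).integrableOn).symm
    _ ≤ ∫ ω in A, B n (X n ω) ∂ℙ :=
        setIntegral_mono_set (hB_int n).integrableOn
          (Filter.Eventually.of_forall fun ω => hB_nonneg n _)
          (Set.union_subset Set.inter_subset_left Set.inter_subset_left).eventuallyLE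

theorem sum_measureReal_exit_add_setIntegral_le
    (hX : ∀ n, Measurable[𝓕 n] (X n)) (hG : ∀ n, MeasurableSet (G n)) (hU : MeasurableSet U)
    (hGU : ∀ n, Disjoint (G n) U) (hB_nonneg : ∀ n x, 0 ≤ B n x)
    (hB_unsafe : ∀ n, ∀ x ∈ U, 1 ≤ B n x) (hB_int : ∀ n, Integrable (fun ω => B n (X n ω)) ℙ)
    (hdrift : ∀ n, ∀ᵐ ω ∂ℙ, X n ω ∈ G n →
      ℙ[fun ω => B (n + 1) (X (n + 1) ω) | 𝓕 n] ω ≤ B n (X n ω)) (n : ℕ) :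
    ∑ m ∈ Finset.range n, ℙ.real (guardedUpTo X G m ∩ X m ⁻¹' U)
        + ∫ ω in guardedUpTo X G n, B n (X n ω) ∂ℙ ≤ ∫ ω, B 0 (X 0 ω) ∂ℙ := by
  induction n with
  | zero => simp
  | succ n ih =>
    rw [Finset.sum_range_succ]
    linarith [setIntegral_guardedUpTo_succ_add_measureReal_le hX hG hU hGU hB_nonneg hB_unsafe
      hB_int n (hdrift n)]

theorem measure_biUnion_exit_le
    (hX : ∀ n, Measurable[𝓕 n] (X n)) (hG : ∀ n, MeasurableSet (G n)) (hU : MeasurableSet U)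
    (hGU : ∀ n, Disjoint (G n) U) (hB_nonneg : ∀ n x, 0 ≤ B n x)
    (hB_unsafe : ∀ n, ∀ x ∈ U, 1 ≤ B n x) (hB_int : ∀ n, Integrable (fun ω => B n (X n ω)) ℙ)
    (hdrift : ∀ n, ∀ᵐ ω ∂ℙ, X n ω ∈ G n →
      ℙ[fun ω => B (n + 1) (X (n + 1) ω) | 𝓕 n] ω ≤ B n (X n ω)) (N : ℕ) :
    ℙ (⋃ m ∈ Finset.range (N + 1), guardedUpTo X G m ∩ X m ⁻¹' U) ≤
      ENNReal.ofReal (∫ ω, B 0 (X 0 ω) ∂ℙ) := by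
  rw [← ofReal_measureReal (measure_ne_top _ _)]
  refine ENNReal.ofReal_le_ofReal ?_
  calc _ ≤ ∑ m ∈ Finset.range (N + 1), ℙ.real (guardedUpTo X G m ∩ X m ⁻¹' U) :=
        measureReal_biUnion_finset_le _ _
    _ ≤ ∑ m ∈ Finset.range (N + 1), ℙ.real (guardedUpTo X G m ∩ X m ⁻¹' U)
          + ∫ ω in guardedUpTo X G (N + 1), B (N + 1) (X (N + 1) ω) ∂ℙ :=
        le_add_of_nonneg_right (setIntegral_nonneg_of_ae (ae_of_all _ fun ω => hB_nonneg _ _))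
    _ ≤ _ := sum_measureReal_exit_add_setIntegral_le hX hG hU hGU hB_nonneg hB_unsafe hB_int
        hdrift (N + 1)

end Barrier

lemma exists_hitTime_eq_coe {Ω 𝒳 : Type*} {X : ℕ → Ω → 𝒳} {S : Set 𝒳} {ω : Ω}
    (h : hitTime X S ω ≠ ⊤) : ∃ m : ℕ, hitTime X S ω = m ∧ X m ω ∈ S ∧ ∀ j < m, X j ω ∉ S := by
  classical
  have hex : ∃ n, X n ω ∈ S := by
    by_contra! hc
    exact h (by simp [hitTime, hc])
  refine ⟨Nat.find hex, ?_, Nat.find_spec hex, fun j => Nat.find_min hex⟩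
  exact le_antisymm (iInf₂_le (Nat.find hex) (Nat.find_spec hex))
    (le_iInf₂ fun n hn => by exact_mod_cast Nat.find_min' hex hn)

section ORBF

variable {Ω 𝒳 : Type*} {X : ℕ → Ω → 𝒳} {U T : Set 𝒳} {k : ℕ}
  {t : Fin (k + 1) → ℕ} {O : Fin (k + 1) → Set 𝒳}

/-- The paper's `G_n \ T`. -/
def orbfGuard (U T : Set 𝒳) (t : Fin (k + 1) → ℕ) (O : Fin (k + 1) → Set 𝒳) (n : ℕ) :
    Set 𝒳 :=
  {x | x ∉ U ∪ T ∧ ∀ i, t i = n → x ∈ O i}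

lemma measurableSet_orbfGuard [MeasurableSpace 𝒳] (hU : MeasurableSet U) (hT : MeasurableSet T)
    (hO : ∀ i, MeasurableSet (O i)) (n : ℕ) : MeasurableSet (orbfGuard U T t O n) := by
  have : orbfGuard U T t O n = (U ∪ T)ᶜ ∩ ⋂ i, ⋂ (_ : t i = n), O i := by
    ext x
    simp [orbfGuard]
  rw [this]
  exact (hU.union hT).compl.inter (.iInter fun i => .iInter fun _ => hO i)

lemma disjoint_orbfGuard (n : ℕ) : Disjoint (orbfGuard U T t O n) U :=
  Set.disjoint_left.2 fun _ hx hU => hx.1 (Or.inl hU)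

lemma setOf_orbf_violation_subset (N : ℕ) :
    {ω | hitTime X (U ∪ T) ω ≤ (N : ℕ∞) ∧ X ((hitTime X (U ∪ T) ω).toNat) ω ∈ U ∧
        ∀ i, (t i : ℕ∞) < hitTime X (U ∪ T) ω → X (t i) ω ∈ O i} ⊆
      ⋃ m ∈ Finset.range (N + 1), guardedUpTo X (orbfGuard U T t O) m ∩ X m ⁻¹' U := by
  rintro ω ⟨hN, hXU, hobs⟩
  obtain ⟨m, hm, -, hmin⟩ := exists_hitTime_eq_coe (ne_top_of_le_ne_top (ENat.natCast_ne_top N) hN)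
  rw [hm] at hN hXU hobs
  simp only [Set.mem_iUnion₂, Finset.mem_range]
  refine ⟨m, Nat.lt_succ_of_le (by exact_mod_cast hN), fun j hj => ⟨hmin j hj, ?_⟩,
    by simpa using hXU⟩
  rintro i rfl
  exact hobs i (by exact_mod_cast hj)

end ORBF

theorem orbf_bounded_time_guarantee_general
    {Ω : Type*} {m0 : MeasurableSpace Ω} (ℙ : Measure Ω) [IsProbabilityMeasure ℙ]
    (𝓕 : Filtration ℕ m0)
    {𝒳 : Type*} [MeasurableSpace 𝒳]
    (X : ℕ → Ω → 𝒳) (hX_adapted : ∀ n, Measurable[𝓕 n] (X n))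
    (x₀ : 𝒳) (hX0 : ∀ᵐ ω ∂ℙ, X 0 ω = x₀)
    (U : Set 𝒳) (hU : MeasurableSet U)
    (T : Set 𝒳) (hT : MeasurableSet T)
    (k : ℕ) (t : Fin (k + 1) → ℕ)
    (O : Fin (k + 1) → Set 𝒳) (hO : ∀ i, MeasurableSet (O i))
    (B : ℕ → 𝒳 → ℝ)
    (hB_meas : ∀ n, Measurable (B n))
    (hB_bdd : ∀ n, ∃ C : ℝ, ∀ x, |B n x| ≤ C)
    (p : ℝ)
    -- (i) nonnegativity
    (h_nonneg : ∀ n, ∀ x : 𝒳, 0 ≤ B n x)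
    -- (ii) initial condition
    (h_init : B 0 x₀ ≤ p)
    -- (iii) barrier at least 1 on the unsafe set
    (h_unsafe : ∀ n, ∀ x ∈ U, 1 ≤ B n x)
    -- (iv) supermartingale (drift) condition on `G n \ T`, for `n ≤ t_k`
    (h_drift₁ : ∀ n ≤ t (Fin.last k), ∀ᵐ ω ∂ℙ,
      (X n ω ∉ U ∧ X n ω ∉ T ∧ ∀ i, t i = n → X n ω ∈ O i) →
        (ℙ[fun ω' => B (n + 1) (X (n + 1) ω') | 𝓕 n]) ω ≤ B n (X n ω))
    -- (v) supermartingale (drift) condition outside `U ∪ T`, for `n > t_k`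
    (h_drift₂ : ∀ n, t (Fin.last k) < n → ∀ᵐ ω ∂ℙ,
      X n ω ∉ U ∪ T → (ℙ[fun ω' => B (n + 1) (X (n + 1) ω') | 𝓕 n]) ω ≤ B n (X n ω)) :
    ∀ N : ℕ,
      ℙ {ω | hitTime X (U ∪ T) ω ≤ (N : ℕ∞) ∧
          X ((hitTime X (U ∪ T) ω).toNat) ω ∈ U ∧
          ∀ i, (t i : ℕ∞) < hitTime X (U ∪ T) ω → X (t i) ω ∈ O i} ≤
        ENNReal.ofReal p := by
  intro N
  have hB_int : ∀ n, Integrable (fun ω => B n (X n ω)) ℙ := fun n =>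
    have ⟨C, hC⟩ := hB_bdd n
    .of_bound ((hB_meas n).comp ((hX_adapted n).mono (𝓕.le n) le_rfl)).aestronglyMeasurable C
      (ae_of_all _ fun ω => hC _)
  have hdrift : ∀ n, ∀ᵐ ω ∂ℙ, X n ω ∈ orbfGuard U T t O n →
      ℙ[fun ω => B (n + 1) (X (n + 1) ω) | 𝓕 n] ω ≤ B n (X n ω) := by
    intro n
    rcases le_or_gt n (t (Fin.last k)) with hn | hn
    · filter_upwards [h_drift₁ n hn] with ω hω hG
      exact hω ⟨fun h => hG.1 (.inl h), fun h => hG.1 (.inr h), hG.2⟩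
    · filter_upwards [h_drift₂ n hn] with ω hω hG using hω hG.1
  have hB0 : ∫ ω, B 0 (X 0 ω) ∂ℙ = B 0 x₀ := by
    rw [integral_congr_ae (hX0.mono fun ω hω => by rw [hω]), integral_const]
    simp
  calc _ ≤ _ := measure_mono (setOf_orbf_violation_subset N)
    _ ≤ ENNReal.ofReal (∫ ω, B 0 (X 0 ω) ∂ℙ) :=
        measure_biUnion_exit_le hX_adapted (measurableSet_orbfGuard hU hT hO) hU
          disjoint_orbfGuard h_nonneg h_unsafe hB_int hdrift N
    _ ≤ ENNReal.ofReal p := ENNReal.ofReal_le_ofReal (hB0 ▸ h_init)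

/-- If `B` is an ORBF with level `p` for the target set `T` and
`τ = inf {n | X_n ∈ U ∪ T}`, then for every `N`,
`ℙ(τ ≤ N, X_τ ∈ U, and X_{t_i} ∈ O_i for every i with t_i < τ) ≤ p`. -/
theorem orbf_bounded_time_guarantee
    {Ω : Type*} {m0 : MeasurableSpace Ω} (ℙ : Measure Ω) [IsProbabilityMeasure ℙ]
    (𝓕 : Filtration ℕ m0)
    {𝒳 : Type*} [MeasurableSpace 𝒳]
    (X : ℕ → Ω → 𝒳) (hX_adapted : ∀ n, Measurable[𝓕 n] (X n))
    (x₀ : 𝒳) (hX0 : ∀ᵐ ω ∂ℙ, X 0 ω = x₀)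
    (U : Set 𝒳) (hU : MeasurableSet U)
    (T : Set 𝒳) (hT : MeasurableSet T) (hUT : Disjoint U T)
    (k : ℕ) (t : Fin (k + 1) → ℕ) (ht : StrictMono t)
    (O : Fin (k + 1) → Set 𝒳) (hO : ∀ i, MeasurableSet (O i))
    (B : ℕ → 𝒳 → ℝ)
    (hB_meas : ∀ n, Measurable (B n))
    (hB_bdd : ∀ n, ∃ C : ℝ, ∀ x, |B n x| ≤ C)
    (p : ℝ)
    -- (i) nonnegativity
    (h_nonneg : ∀ n, ∀ x : 𝒳, 0 ≤ B n x)
    -- (ii) initial condition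
    (h_init : B 0 x₀ ≤ p)
    -- (iii) barrier at least 1 on the unsafe set
    (h_unsafe : ∀ n, ∀ x ∈ U, 1 ≤ B n x)
    -- (iv) supermartingale (drift) condition on `G n \ T`, for `n ≤ t_k`
    (h_drift₁ : ∀ n ≤ t (Fin.last k), ∀ᵐ ω ∂ℙ,
      (X n ω ∉ U ∧ X n ω ∉ T ∧ ∀ i, t i = n → X n ω ∈ O i) →
        (ℙ[fun ω' => B (n + 1) (X (n + 1) ω') | 𝓕 n]) ω ≤ B n (X n ω))
    -- (v) supermartingale (drift) condition outside `U ∪ T`, for `n > t_k`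
    (h_drift₂ : ∀ n, t (Fin.last k) < n → ∀ᵐ ω ∂ℙ,
      X n ω ∉ U ∪ T → (ℙ[fun ω' => B (n + 1) (X (n + 1) ω') | 𝓕 n]) ω ≤ B n (X n ω)) :
    ∀ N : ℕ,
      ℙ {ω | hitTime X (U ∪ T) ω ≤ (N : ℕ∞) ∧
          X ((hitTime X (U ∪ T) ω).toNat) ω ∈ U ∧
          ∀ i, (t i : ℕ∞) < hitTime X (U ∪ T) ω → X (t i) ω ∈ O i} ≤
        ENNReal.ofReal p :=
  orbf_bounded_time_guarantee_general ℙ 𝓕 X hX_adapted x₀ hX0 U hU T hT k t O hO B hB_meas hB_bdd p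
    h_nonneg h_init h_unsafe h_drift₁ h_drift₂
end
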